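/- Let B be the EABP and let X be the linear form X(z) = Σ_{i=1}^n x_i for z = Σ_i x_i e_i^(f) + Σ_j y_j e_j^(m). Then there exists a linear operator T : B → B such that zt = (X(z)T(t) + X(t)T(z))/2 for all z, t ∈ B (i.e., B is induced by a linear operator with respect to X) if and only if P^(f)_{ij,k} = P^(f)_{1j,k} and P^(m)_{ij,l} = P^(m)_{1j,l} for all i, k = 1,…,n and j, l = 1,…,ν. Moreover, in that case the operator is given by T(z) = 2 z e_1^(f). -/

import Mathlib

open scoped BigOperators

/-- Multiplication of the evolution algebra of a bisexual population (EABP) on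
`ℝ^{n+ν} = (Fin n → ℝ) × (Fin ν → ℝ)`. -/
noncomputable def bmul {n ν : ℕ} (Pf : Fin n → Fin ν → Fin n → ℝ)
    (Pm : Fin n → Fin ν → Fin ν → ℝ)
    (z t : (Fin n → ℝ) × (Fin ν → ℝ)) : (Fin n → ℝ) × (Fin ν → ℝ) :=
  (fun k => (1 / 2) * ∑ i, ∑ j, Pf i j k * (z.1 i * t.2 j + t.1 i * z.2 j),
   fun l => (1 / 2) * ∑ i, ∑ j, Pm i j l * (z.1 i * t.2 j + t.1 i * z.2 j))

/-- The female basis element e_i^(f) of the EABP. -/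
def efb {n ν : ℕ} (i : Fin n) : (Fin n → ℝ) × (Fin ν → ℝ) := (Pi.single i 1, 0)

/-!
A product of the form `x y = (f x • T y + f y • T x) / 2` is determined on the pair
`e_i^(f) e_j^(m)` by `T e_j^(m)` alone, since `X(e_i^(f)) = 1` and `X(e_j^(m)) = 0`; so the
inheritance vectors `P_{ij,·}` cannot depend on `i`. Conversely, if they do not, the bilinear
product factors as `X(z) T(t) + X(t) T(z)` with `T` sending `e_j^(m)` to `P_{1j,·}` and
killing the female basis. Since `e_1^(f) e_1^(f) = 0` and `X(e_1^(f)) = 1`, any such `T`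
vanishes at `e_1^(f)`, and then `z e_1^(f) = T(z) / 2`.
-/

section InducedOperator

variable {K M : Type*} [Field K] [NeZero (2 : K)] [AddCommGroup M] [Module K M]

theorem apply_eq_two_smul_mul_of_induced (mul : M → M → M) (f : M → K) (T : M → M)
    (hT : ∀ x y, mul x y = (2⁻¹ : K) • (f x • T y + f y • T x))
    {e : M} (he : f e = 1) (hee : mul e e = 0) (x : M) :
    T x = (2 : K) • mul x e := by
  have hTe : T e = 0 := by
    have h := hT e e
    rwa [hee, he, one_smul, ← two_smul K, smul_smul, inv_mul_cancel₀ two_ne_zero, one_smul,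
      eq_comm] at h
  rw [hT, he, hTe, smul_zero, zero_add, one_smul, smul_smul, mul_inv_cancel₀ two_ne_zero,
    one_smul]

end InducedOperator

namespace EABP

variable {n ν : ℕ} (Pf : Fin n → Fin ν → Fin n → ℝ) (Pm : Fin n → Fin ν → Fin ν → ℝ)

def emb (j : Fin ν) : (Fin n → ℝ) × (Fin ν → ℝ) := (0, Pi.single j 1)

/-- The offspring of `e_i^(f) e_j^(m)` up to the factor `1/2`. -/
def inheritVec (i : Fin n) (j : Fin ν) : (Fin n → ℝ) × (Fin ν → ℝ) := (Pf i j, Pm i j)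

theorem bmul_eq_sum (z t : (Fin n → ℝ) × (Fin ν → ℝ)) :
    bmul Pf Pm z t =
      (2⁻¹ : ℝ) • ∑ i, ∑ j, (z.1 i * t.2 j + t.1 i * z.2 j) • inheritVec Pf Pm i j := by
  ext k <;> simp [bmul, inheritVec, Prod.fst_sum, Prod.snd_sum, Finset.mul_sum, mul_comm]

theorem bmul_efb_emb (i : Fin n) (j : Fin ν) :
    bmul Pf Pm (efb i) (emb j) = (2⁻¹ : ℝ) • inheritVec Pf Pm i j := by
  simp [bmul_eq_sum, efb, emb, Pi.single_apply]

theorem bmul_efb_efb (i i' : Fin n) : bmul (ν := ν) Pf Pm (efb i) (efb i') = 0 := by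
  simp [bmul_eq_sum, efb]

theorem sum_efb_fst (i : Fin n) : ∑ k, (efb (ν := ν) i).1 k = 1 := by
  simp [efb]

theorem sum_emb_fst (j : Fin ν) : ∑ k, (emb (n := n) j).1 k = 0 := by
  simp [emb]

theorem inheritVec_eq_of_induced (T : (Fin n → ℝ) × (Fin ν → ℝ) → (Fin n → ℝ) × (Fin ν → ℝ))
    (hT : ∀ z t, bmul Pf Pm z t = (2⁻¹ : ℝ) • ((∑ i, z.1 i) • T t + (∑ i, t.1 i) • T z))
    (i : Fin n) (j : Fin ν) : inheritVec Pf Pm i j = T (emb j) := by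
  have h := hT (efb i) (emb j)
  rwa [bmul_efb_emb, sum_efb_fst, sum_emb_fst, one_smul, zero_smul, add_zero,
    smul_right_inj (inv_ne_zero two_ne_zero)] at h

theorem bmul_eq_of_inheritVec_eq (c : Fin ν → (Fin n → ℝ) × (Fin ν → ℝ))
    (hc : ∀ i j, inheritVec Pf Pm i j = c j) (z t : (Fin n → ℝ) × (Fin ν → ℝ)) :
    bmul Pf Pm z t = (2⁻¹ : ℝ) • ((∑ i, z.1 i) • ∑ j, t.2 j • c j
      + (∑ i, t.1 i) • ∑ j, z.2 j • c j) := by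
  simp only [bmul_eq_sum, hc, add_smul, mul_smul, Finset.sum_add_distrib, ← Finset.smul_sum,
    ← Finset.sum_smul]

theorem inheritVec_eq_iff (i₀ : Fin n) :
    (∀ i j, inheritVec Pf Pm i j = inheritVec Pf Pm i₀ j) ↔
      ∀ (i k : Fin n) (j l : Fin ν), Pf i j k = Pf i₀ j k ∧ Pm i j l = Pm i₀ j l := by
  simp only [inheritVec, Prod.ext_iff, funext_iff]
  exact ⟨fun h i k j l => ⟨(h i j).1 k, (h i j).2 l⟩,
    fun h i j => ⟨fun k => (h i k j j).1, fun l => (h i i j l).2⟩⟩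

end EABP

theorem stmt_18_general (n ν : ℕ) (hn : 0 < n)
    (Pf : Fin n → Fin ν → Fin n → ℝ) (Pm : Fin n → Fin ν → Fin ν → ℝ) :
    ((∃ T : (Fin n → ℝ) × (Fin ν → ℝ) →ₗ[ℝ] (Fin n → ℝ) × (Fin ν → ℝ),
        ∀ z t : (Fin n → ℝ) × (Fin ν → ℝ),
          bmul Pf Pm z t = (2⁻¹ : ℝ) • ((∑ i, z.1 i) • T t + (∑ i, t.1 i) • T z))
      ↔
      (∀ (i k : Fin n) (j l : Fin ν),
        Pf i j k = Pf ⟨0, hn⟩ j k ∧ Pm i j l = Pm ⟨0, hn⟩ j l))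
    ∧
    (∀ T : (Fin n → ℝ) × (Fin ν → ℝ) →ₗ[ℝ] (Fin n → ℝ) × (Fin ν → ℝ),
      (∀ z t : (Fin n → ℝ) × (Fin ν → ℝ),
        bmul Pf Pm z t = (2⁻¹ : ℝ) • ((∑ i, z.1 i) • T t + (∑ i, t.1 i) • T z)) →
      ∀ z : (Fin n → ℝ) × (Fin ν → ℝ),
        T z = (2 : ℝ) • bmul Pf Pm z (efb ⟨0, hn⟩)) := by
  refine ⟨⟨fun ⟨T, hT⟩ => ?_, fun h => ?_⟩, fun T hT =>
    apply_eq_two_smul_mul_of_induced (bmul Pf Pm) _ T hT (EABP.sum_efb_fst _)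
      (EABP.bmul_efb_efb _ _ _ _)⟩
  · rw [← EABP.inheritVec_eq_iff]
    intro i j
    rw [EABP.inheritVec_eq_of_induced Pf Pm T hT, EABP.inheritVec_eq_of_induced Pf Pm T hT]
  · rw [← EABP.inheritVec_eq_iff] at h
    refine ⟨(Fintype.linearCombination ℝ (EABP.inheritVec Pf Pm ⟨0, hn⟩)).comp
      (LinearMap.snd ℝ _ _), fun z t => ?_⟩
    simpa [Fintype.linearCombination_apply] using EABP.bmul_eq_of_inheritVec_eq Pf Pm _ h z t

/-- The EABP 𝓑 is induced by a linear operator with respect to the linear form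
X(z) = Σ_i x_i, i.e. there is a linear T with zt = (X(z)T(t) + X(t)T(z))/2, iff
P^(f)_{ij,k} = P^(f)_{1j,k} and P^(m)_{ij,l} = P^(m)_{1j,l} for all i,k,j,l; moreover, in that
case T(z) = 2 z e₁^(f). -/
theorem stmt_18 (n ν : ℕ) (hn : 0 < n) (hν : 0 < ν)
    (Pf : Fin n → Fin ν → Fin n → ℝ) (Pm : Fin n → Fin ν → Fin ν → ℝ)
    (hPf0 : ∀ i k j, 0 ≤ Pf i k j) (hPf1 : ∀ i k, ∑ j, Pf i k j = 1)
    (hPm0 : ∀ i k l, 0 ≤ Pm i k l) (hPm1 : ∀ i k, ∑ l, Pm i k l = 1) :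
    ((∃ T : (Fin n → ℝ) × (Fin ν → ℝ) →ₗ[ℝ] (Fin n → ℝ) × (Fin ν → ℝ),
        ∀ z t : (Fin n → ℝ) × (Fin ν → ℝ),
          bmul Pf Pm z t = (2⁻¹ : ℝ) • ((∑ i, z.1 i) • T t + (∑ i, t.1 i) • T z))
      ↔
      (∀ (i k : Fin n) (j l : Fin ν),
        Pf i j k = Pf ⟨0, hn⟩ j k ∧ Pm i j l = Pm ⟨0, hn⟩ j l))
    ∧
    (∀ T : (Fin n → ℝ) × (Fin ν → ℝ) →ₗ[ℝ] (Fin n → ℝ) × (Fin ν → ℝ),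
      (∀ z t : (Fin n → ℝ) × (Fin ν → ℝ),
        bmul Pf Pm z t = (2⁻¹ : ℝ) • ((∑ i, z.1 i) • T t + (∑ i, t.1 i) • T z)) →
      ∀ z : (Fin n → ℝ) × (Fin ν → ℝ),
        T z = (2 : ℝ) • bmul Pf Pm z (efb ⟨0, hn⟩)) :=
  stmt_18_general n ν hn Pf Pm
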